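/- arXiv:0803.1249 — 2 statements merged into one kernel-verified Lean document; each statement's English description precedes it below -/
import Mathlib

section
/- For every y ∈ Ω and every x ∈ P, letting ρ = ∇ₓu(y,x) (so that ∇_ρφ(y,ρ) = x), one has the identity −Δ_y u(y,x) = Δ_y φ(y,ρ) − Σ_{a=1}^{n} ⟨(∇²_ρφ(y,ρ))⁻¹ ∇_ρ(∂_{y_a}φ)(y,ρ), ∇_ρ(∂_{y_a}φ)(y,ρ)⟩, where Δ_y = Σ_{a=1}^{n} ∂²/∂y_a² is the Euclidean Laplacian in the parameter variables y. (This is the Laplace–Legendre identity: the Legendre transform intertwines the Laplacian in the parameters with the torus-invariant harmonic map operator.) -/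
open scoped BigOperators
open MeasureTheory Real

noncomputable section

/-- Partial derivative of `f` at `p` in the `i`-th coordinate direction. -/
def pd {k : ℕ} (f : (Fin k → ℝ) → ℝ) (i : Fin k) (p : Fin k → ℝ) : ℝ :=
  fderiv ℝ f p (Pi.single i 1)

/-- Euclidean gradient, as the vector of partial derivatives. -/
def grad {k : ℕ} (f : (Fin k → ℝ) → ℝ) (p : Fin k → ℝ) : Fin k → ℝ :=
  fun i => pd f i p

/-- Hessian matrix of second partial derivatives. -/
def hess {k : ℕ} (f : (Fin k → ℝ) → ℝ) (p : Fin k → ℝ) : Matrix (Fin k) (Fin k) ℝ :=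
  Matrix.of fun i j => pd (fun q => pd f j q) i p

/-- Euclidean Laplacian. -/
def lap {k : ℕ} (f : (Fin k → ℝ) → ℝ) (p : Fin k → ℝ) : ℝ :=
  ∑ i, pd (fun q => pd f i q) i p

/-- Euclidean inner product on `Fin k → ℝ`. -/
def dotp {k : ℕ} (v w : Fin k → ℝ) : ℝ := ∑ i, v i * w i


/-! Since `φ(y, ·)` is convex, `u(y, x) = sup_ρ (⟨x, ρ⟩ - φ(y, ρ))`, the supremum being attained at
`ρ = R(y, x)`. The envelope argument (a differentiable function touching a minorant has the
minorant's derivative there) gives `∇ₓu = R`, so that `R` is smooth, and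
`∂_{y_a} u(y, x) = -∂_{y_a} φ(y, R(y, x))`. Differentiating once more in `y_a` by the chain rule
produces `-∂²_{y_a} φ - ⟨∂_{y_a} R, ∇_ρ ∂_{y_a} φ⟩`, and implicit differentiation of
`∇_ρ φ(y, R(y, x)) = x` gives `∇²_ρ φ · ∂_{y_a} R = -∇_ρ ∂_{y_a} φ`. -/

open Filter Topology Matrix

lemma fderiv_apply_eq_dotp_grad {k : ℕ} (f : (Fin k → ℝ) → ℝ) (p w : Fin k → ℝ) :
    fderiv ℝ f p w = dotp w (grad f p) := by
  conv_lhs => rw [← Finset.univ_sum_single w]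
  simp only [map_sum, dotp, grad, pd]
  refine Finset.sum_congr rfl fun i _ => ?_
  rw [← smul_eq_mul, ← map_smul, ← Pi.single_smul, smul_eq_mul, mul_one]

lemma Filter.EventuallyEq.pd_eq {k : ℕ} {f g : (Fin k → ℝ) → ℝ} {p : Fin k → ℝ}
    (h : f =ᶠ[𝓝 p] g) (i : Fin k) : pd f i p = pd g i p := by
  rw [pd, pd, h.fderiv_eq]

lemma pd_neg {k : ℕ} (f : (Fin k → ℝ) → ℝ) (i : Fin k) (p : Fin k → ℝ) :
    pd (fun q => -f q) i p = -pd f i p := by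
  simp [pd, fderiv_fun_neg]

lemma hasDerivAt_comp_line {k : ℕ} {f : (Fin k → ℝ) → ℝ} {p v : Fin k → ℝ} {t : ℝ}
    (hf : DifferentiableAt ℝ f (p + t • v)) :
    HasDerivAt (fun s : ℝ => f (p + s • v)) (dotp v (grad f (p + t • v))) t := by
  rw [← fderiv_apply_eq_dotp_grad]
  refine hf.hasFDerivAt.comp_hasDerivAt t ?_
  simpa using ((hasDerivAt_id t).smul_const v).const_add p

lemma hasDerivAt_dotp_grad_comp_line {k : ℕ} {f : (Fin k → ℝ) → ℝ} (hf : ContDiff ℝ 2 f)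
    (p v : Fin k → ℝ) (t : ℝ) :
    HasDerivAt (fun s : ℝ => dotp v (grad f (p + s • v)))
      (dotp v (hess f (p + t • v) *ᵥ v)) t := by
  have hpd : ∀ i, ContDiff ℝ 1 (fun q => pd f i q) := fun i =>
    (hf.fderiv_right le_rfl).clm_apply contDiff_const
  refine (HasDerivAt.fun_sum (u := Finset.univ) fun i _ =>
    (hasDerivAt_comp_line ((hpd i).differentiable one_ne_zero _)).const_mul (v i)).congr_deriv ?_
  simp only [dotp, Matrix.mulVec, dotProduct, hess, grad, Matrix.of_apply, Finset.mul_sum]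
  rw [Finset.sum_comm]
  exact Finset.sum_congr rfl fun i _ => Finset.sum_congr rfl fun j _ => by ring

lemma dotp_sub_le_of_grad_eq {k : ℕ} {f : (Fin k → ℝ) → ℝ} (hf : ContDiff ℝ 2 f)
    (hconv : ∀ p, (hess f p).PosSemidef) {x ρ₀ : Fin k → ℝ} (hx : grad f ρ₀ = x)
    (ρ : Fin k → ℝ) : dotp x ρ - f ρ ≤ dotp x ρ₀ - f ρ₀ := by
  set v := ρ - ρ₀
  have hd : ∀ t : ℝ, HasDerivAt (fun s : ℝ => f (ρ₀ + s • v)) (dotp v (grad f (ρ₀ + t • v))) t :=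
    fun t => hasDerivAt_comp_line (hf.differentiable two_ne_zero _)
  have hconvex : ConvexOn ℝ Set.univ (fun s : ℝ => f (ρ₀ + s • v)) := by
    refine convexOn_of_hasDerivWithinAt2_nonneg convex_univ
      (fun t _ => (hd t).continuousAt.continuousWithinAt)
      (fun t _ => (hd t).hasDerivWithinAt)
      (fun t _ => (hasDerivAt_dotp_grad_comp_line hf ρ₀ v t).hasDerivWithinAt) fun t _ => ?_
    simpa [dotp, dotProduct] using (hconv (ρ₀ + t • v)).dotProduct_mulVec_nonneg v
  have hslope := hconvex.le_slope_of_hasDerivAt (Set.mem_univ 0) (Set.mem_univ 1) one_pos (hd 0)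
  simp only [slope, zero_smul, add_zero, one_smul, sub_zero, inv_one, smul_eq_mul, one_mul,
    vsub_eq_sub, hx, v, add_sub_cancel] at hslope
  have hlin : dotp (ρ - ρ₀) x = dotp x ρ - dotp x ρ₀ := by
    simp only [dotp, ← Finset.sum_sub_distrib]
    exact Finset.sum_congr rfl fun i _ => by simp only [Pi.sub_apply]; ring
  linarith

lemma fderiv_fderiv_apply_comm {X : Type*} [NormedAddCommGroup X] [NormedSpace ℝ X]
    {f : X → ℝ} {p : X} (hf : ContDiffAt ℝ 2 f p) (v w : X) :
    fderiv ℝ (fun q => fderiv ℝ f q v) p w = fderiv ℝ (fun q => fderiv ℝ f q w) p v := by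
  have hf' : DifferentiableAt ℝ (fderiv ℝ f) p :=
    (hf.fderiv_right (m := 1) le_rfl).differentiableAt one_ne_zero
  rw [fderiv_clm_apply hf' (differentiableAt_const v),
    fderiv_clm_apply hf' (differentiableAt_const w)]
  simpa using (hf.isSymmSndFDerivAt (by simp)).eq w v

lemma hess_isSymm {k : ℕ} {f : (Fin k → ℝ) → ℝ} {p : Fin k → ℝ} (hf : ContDiffAt ℝ 2 f p) :
    (hess f p).IsSymm :=
  Matrix.IsSymm.ext fun _ _ => fderiv_fderiv_apply_comm hf _ _

section Product

variable {E F G : Type*} [NormedAddCommGroup E] [NormedSpace ℝ E] [NormedAddCommGroup F]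
  [NormedSpace ℝ F] [NormedAddCommGroup G] [NormedSpace ℝ G]

lemma ContDiffAt.eventually_differentiableAt {k : WithTop ℕ∞} {f : E → F} {p : E}
    (h : ContDiffAt ℝ k f p) (hk : 1 ≤ k) : ∀ᶠ q in 𝓝 p, DifferentiableAt ℝ f q :=
  ((h.of_le hk).eventually (by simp)).mono fun _ hq => hq.differentiableAt one_ne_zero

lemma ContDiffAt.of_uncurry_left {k : WithTop ℕ∞} {φ : E → F → G} {y : E} {ρ : F}
    (h : ContDiffAt ℝ k (Function.uncurry φ) (y, ρ)) : ContDiffAt ℝ k (fun y' => φ y' ρ) y :=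
  h.comp (f := fun y' => (y', ρ)) y (contDiffAt_id.prodMk contDiffAt_const)

lemma ContDiffAt.of_uncurry_right {k : WithTop ℕ∞} {φ : E → F → G} {y : E} {ρ : F}
    (h : ContDiffAt ℝ k (Function.uncurry φ) (y, ρ)) : ContDiffAt ℝ k (φ y) ρ :=
  h.comp ρ (contDiffAt_const.prodMk contDiffAt_id)

lemma fderiv_fst_apply {φ : E → F → G} {y : E} {ρ : F}
    (h : DifferentiableAt ℝ (Function.uncurry φ) (y, ρ)) (v : E) :
    fderiv ℝ (fun y' => φ y' ρ) y v = fderiv ℝ (Function.uncurry φ) (y, ρ) (v, 0) := by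
  have hslice : HasFDerivAt (fun y' => φ y' ρ)
      ((fderiv ℝ (Function.uncurry φ) (y, ρ)).comp (.inl ℝ E F)) y :=
    h.hasFDerivAt.comp (f := fun y' => (y', ρ)) y (hasFDerivAt_prodMk_left y ρ)
  rw [hslice.fderiv]
  simp

lemma fderiv_snd_apply {φ : E → F → G} {y : E} {ρ : F}
    (h : DifferentiableAt ℝ (Function.uncurry φ) (y, ρ)) (w : F) :
    fderiv ℝ (φ y) ρ w = fderiv ℝ (Function.uncurry φ) (y, ρ) (0, w) := by
  have hslice : HasFDerivAt (φ y) ((fderiv ℝ (Function.uncurry φ) (y, ρ)).comp (.inr ℝ E F)) ρ :=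
    h.hasFDerivAt.comp ρ (hasFDerivAt_prodMk_right y ρ)
  rw [hslice.fderiv]
  simp

end Product

section Coordinates

variable {n m : ℕ}

lemma eventuallyEq_uncurry_pd_fst {φ : (Fin n → ℝ) → (Fin m → ℝ) → ℝ}
    {p : (Fin n → ℝ) × (Fin m → ℝ)}
    (h : ∀ᶠ q in 𝓝 p, DifferentiableAt ℝ (Function.uncurry φ) q) (a : Fin n) :
    Function.uncurry (fun y ρ => pd (fun y' => φ y' ρ) a y) =ᶠ[𝓝 p]
      fun q => fderiv ℝ (Function.uncurry φ) q (Pi.single a 1, 0) :=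
  h.mono fun _ hq => fderiv_fst_apply hq _

lemma eventuallyEq_uncurry_pd_snd {φ : (Fin n → ℝ) → (Fin m → ℝ) → ℝ}
    {p : (Fin n → ℝ) × (Fin m → ℝ)}
    (h : ∀ᶠ q in 𝓝 p, DifferentiableAt ℝ (Function.uncurry φ) q) (i : Fin m) :
    Function.uncurry (fun y ρ => pd (φ y) i ρ) =ᶠ[𝓝 p]
      fun q => fderiv ℝ (Function.uncurry φ) q (0, Pi.single i 1) :=
  h.mono fun _ hq => fderiv_snd_apply hq _

lemma differentiableAt_uncurry_pd_fst {φ : (Fin n → ℝ) → (Fin m → ℝ) → ℝ}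
    {p : (Fin n → ℝ) × (Fin m → ℝ)} (h : ContDiffAt ℝ 2 (Function.uncurry φ) p) (a : Fin n) :
    DifferentiableAt ℝ (Function.uncurry fun y ρ => pd (fun y' => φ y' ρ) a y) p :=
  (((h.fderiv_right (m := 1) le_rfl).clm_apply contDiffAt_const).differentiableAt
    one_ne_zero).congr_of_eventuallyEq
      (eventuallyEq_uncurry_pd_fst (h.eventually_differentiableAt one_le_two) a)

lemma differentiableAt_uncurry_pd_snd {φ : (Fin n → ℝ) → (Fin m → ℝ) → ℝ}
    {p : (Fin n → ℝ) × (Fin m → ℝ)} (h : ContDiffAt ℝ 2 (Function.uncurry φ) p) (i : Fin m) :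
    DifferentiableAt ℝ (Function.uncurry fun y ρ => pd (φ y) i ρ) p :=
  (((h.fderiv_right (m := 1) le_rfl).clm_apply contDiffAt_const).differentiableAt
    one_ne_zero).congr_of_eventuallyEq
      (eventuallyEq_uncurry_pd_snd (h.eventually_differentiableAt one_le_two) i)

lemma differentiableAt_grad_snd {u : (Fin n → ℝ) → (Fin m → ℝ) → ℝ} {y : Fin n → ℝ}
    {x : Fin m → ℝ} (h : ContDiffAt ℝ 2 (Function.uncurry u) (y, x)) :
    DifferentiableAt ℝ (fun y' => grad (u y') x) y :=
  differentiableAt_pi.2 fun i => (differentiableAt_uncurry_pd_snd h i).comp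
    (f := fun y' => (y', x)) y (differentiableAt_id.prodMk (differentiableAt_const x))

lemma pd_fst_pd_snd_comm {φ : (Fin n → ℝ) → (Fin m → ℝ) → ℝ} {y : Fin n → ℝ} {ρ : Fin m → ℝ}
    (h : ContDiffAt ℝ 2 (Function.uncurry φ) (y, ρ)) (a : Fin n) (i : Fin m) :
    pd (fun y' => pd (φ y') i ρ) a y = pd (fun ρ' => pd (fun y' => φ y' ρ') a y) i ρ := by
  have hd := h.eventually_differentiableAt one_le_two
  calc pd (fun y' => pd (φ y') i ρ) a y
      = fderiv ℝ (fun q => fderiv ℝ (Function.uncurry φ) q (0, Pi.single i 1)) (y, ρ)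
          (Pi.single a 1, 0) := by
        rw [← (eventuallyEq_uncurry_pd_snd hd i).fderiv_eq]
        exact fderiv_fst_apply (differentiableAt_uncurry_pd_snd h i) _
    _ = fderiv ℝ (fun q => fderiv ℝ (Function.uncurry φ) q (Pi.single a 1, 0)) (y, ρ)
          (0, Pi.single i 1) := fderiv_fderiv_apply_comm h _ _
    _ = pd (fun ρ' => pd (fun y' => φ y' ρ') a y) i ρ := by
        rw [← (eventuallyEq_uncurry_pd_fst hd a).fderiv_eq]
        exact (fderiv_snd_apply (differentiableAt_uncurry_pd_fst h a) _).symm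

lemma pd_comp_graph {g : (Fin n → ℝ) → (Fin m → ℝ) → ℝ} {S : (Fin n → ℝ) → Fin m → ℝ}
    {y : Fin n → ℝ} (hg : DifferentiableAt ℝ (Function.uncurry g) (y, S y))
    (hS : DifferentiableAt ℝ S y) (a : Fin n) :
    pd (fun y' => g y' (S y')) a y
      = pd (fun y' => g y' (S y)) a y
        + dotp (fderiv ℝ S y (Pi.single a 1)) (grad (g y) (S y)) := by
  have hcomp : HasFDerivAt (fun y' => g y' (S y'))
      ((fderiv ℝ (Function.uncurry g) (y, S y)).comp ((ContinuousLinearMap.id ℝ _).prod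
        (fderiv ℝ S y))) y :=
    hg.hasFDerivAt.comp (f := fun y' => (y', S y')) y ((hasFDerivAt_id y).prodMk hS.hasFDerivAt)
  rw [← fderiv_apply_eq_dotp_grad, pd, pd, fderiv_fst_apply hg, fderiv_snd_apply hg, ← map_add,
    hcomp.fderiv]
  simp

end Coordinates

lemma fderiv_eq_of_eventually_le_of_eq {X : Type*} [NormedAddCommGroup X] [NormedSpace ℝ X]
    {F G : X → ℝ} {z : X} (hF : DifferentiableAt ℝ F z) (hG : DifferentiableAt ℝ G z)
    (hle : G ≤ᶠ[𝓝 z] F) (heq : F z = G z) : fderiv ℝ F z = fderiv ℝ G z := by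
  have hmin : IsLocalMin (F - G) z :=
    hle.mono fun z' hz' => by simp only [Pi.sub_apply, heq, sub_self]; linarith
  rw [← sub_eq_zero, ← fderiv_sub hF hG]
  exact hmin.fderiv_eq_zero

lemma grad_dotp_left {k : ℕ} (ρ x : Fin k → ℝ) : grad (fun x' => dotp x' ρ) x = ρ := by
  have h : HasFDerivAt (fun x' => dotp x' ρ)
      (∑ j, ρ j • (ContinuousLinearMap.proj j : (Fin k → ℝ) →L[ℝ] ℝ)) x :=
    HasFDerivAt.fun_sum fun j _ => (hasFDerivAt_apply j x).mul_const (ρ j)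
  ext i
  simp [grad, pd, h.fderiv, Pi.single_apply]

lemma pd_eq_neg_pd_of_le {k : ℕ} {U f : (Fin k → ℝ) → ℝ} {y : Fin k → ℝ} {c : ℝ}
    (hU : DifferentiableAt ℝ U y) (hf : DifferentiableAt ℝ f y)
    (hle : ∀ᶠ y' in 𝓝 y, c - f y' ≤ U y') (heq : U y = c - f y) (a : Fin k) :
    pd U a y = -pd f a y := by
  rw [pd, fderiv_eq_of_eventually_le_of_eq hU (hf.const_sub c) hle heq, fderiv_const_sub]
  rfl

lemma grad_eq_of_dotp_sub_le {k : ℕ} {U : (Fin k → ℝ) → ℝ} {x ρ : Fin k → ℝ} {c : ℝ}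
    (hU : DifferentiableAt ℝ U x) (hle : ∀ᶠ x' in 𝓝 x, dotp x' ρ - c ≤ U x')
    (heq : U x = dotp x ρ - c) : grad U x = ρ := by
  have hlin : DifferentiableAt ℝ (fun x' => dotp x' ρ - c) x := by
    unfold dotp; fun_prop
  ext i
  rw [grad, pd, fderiv_eq_of_eventually_le_of_eq hU hlin hle heq, fderiv_sub_const]
  exact congrFun (grad_dotp_left ρ x) i

section CriticalCurve

variable {n m : ℕ} {φ : (Fin n → ℝ) → (Fin m → ℝ) → ℝ} {S : (Fin n → ℝ) → Fin m → ℝ}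
  {y : Fin n → ℝ} {x : Fin m → ℝ}

lemma hess_mulVec_fderiv_of_grad_eq (hφ : ContDiffAt ℝ 2 (Function.uncurry φ) (y, S y))
    (hS : DifferentiableAt ℝ S y) (hcrit : ∀ᶠ y' in 𝓝 y, grad (φ y') (S y') = x) (a : Fin n) :
    hess (φ y) (S y) *ᵥ fderiv ℝ S y (Pi.single a 1)
      = -grad (fun ρ => pd (fun y' => φ y' ρ) a y) (S y) := by
  ext i
  have hconst : pd (fun y' => pd (φ y') i (S y')) a y = 0 := by
    have hev : (fun y' => pd (φ y') i (S y')) =ᶠ[𝓝 y] fun _ => x i :=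
      hcrit.mono fun y' h => congrFun h i
    rw [hev.pd_eq]
    simp [pd]
  rw [pd_comp_graph (g := fun y ρ => pd (φ y) i ρ) (differentiableAt_uncurry_pd_snd hφ i) hS,
    pd_fst_pd_snd_comm hφ] at hconst
  have hsymm : dotp (fderiv ℝ S y (Pi.single a 1)) (grad (fun ρ => pd (φ y) i ρ) (S y))
      = (hess (φ y) (S y) *ᵥ fderiv ℝ S y (Pi.single a 1)) i := by
    rw [← (hess_isSymm hφ.of_uncurry_right).eq, ← Matrix.vecMul_transpose,
      Matrix.transpose_transpose]
    rfl
  rw [Pi.neg_apply, ← hsymm]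
  exact eq_neg_of_add_eq_zero_right hconst

lemma pd_pd_comp_of_grad_eq (hφ : ContDiffAt ℝ 2 (Function.uncurry φ) (y, S y))
    (hS : DifferentiableAt ℝ S y) (hcrit : ∀ᶠ y' in 𝓝 y, grad (φ y') (S y') = x)
    (hH : IsUnit (hess (φ y) (S y))) (a : Fin n) :
    pd (fun y' => pd (fun y'' => φ y'' (S y')) a y') a y
      = pd (fun y' => pd (fun y'' => φ y'' (S y)) a y') a y
        - dotp ((hess (φ y) (S y))⁻¹ *ᵥ grad (fun ρ => pd (fun y' => φ y' ρ) a y) (S y))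
            (grad (fun ρ => pd (fun y' => φ y' ρ) a y) (S y)) := by
  set v := grad (fun ρ => pd (fun y' => φ y' ρ) a y) (S y)
  have hw : fderiv ℝ S y (Pi.single a 1) = -((hess (φ y) (S y))⁻¹ *ᵥ v) := by
    rw [← Matrix.mulVec_neg, ← hess_mulVec_fderiv_of_grad_eq hφ hS hcrit a, Matrix.mulVec_mulVec,
      Matrix.nonsing_inv_mul _ ((Matrix.isUnit_iff_isUnit_det _).1 hH), Matrix.one_mulVec]
  rw [pd_comp_graph (g := fun y ρ => pd (fun y' => φ y' ρ) a y)
    (differentiableAt_uncurry_pd_fst hφ a) hS, hw, sub_eq_add_neg]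
  simp [dotp, v]

end CriticalCurve

theorem laplace_legendre_identity_general
    {m n : ℕ}
    (Ω : Set (Fin n → ℝ)) (hΩ : IsOpen Ω)
    (P : Set (Fin m → ℝ)) (hP : IsOpen P)
    (φ : (Fin n → ℝ) → (Fin m → ℝ) → ℝ)
    (hφ : ContDiffOn ℝ (⊤ : ℕ∞)
      (fun p : (Fin n → ℝ) × (Fin m → ℝ) => φ p.1 p.2) (Ω ×ˢ Set.univ))
    (hpos : ∀ y ∈ Ω, ∀ ρ : Fin m → ℝ, (hess (φ y) ρ).PosDef)
    -- `R y` is the inverse of the gradient map `∇_ρ φ(y,·) : ℝᵐ → P`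
    (R : (Fin n → ℝ) → (Fin m → ℝ) → (Fin m → ℝ))
    (hR₁ : ∀ y ∈ Ω, ∀ x ∈ P, grad (φ y) (R y x) = x)
    -- `u(y,·)` is the Legendre transform of `φ(y,·)`
    (u : (Fin n → ℝ) → (Fin m → ℝ) → ℝ)
    (hu : ∀ y ∈ Ω, ∀ x ∈ P, u y x = dotp x (R y x) - φ y (R y x))
    (husm : ContDiffOn ℝ (⊤ : ℕ∞)
      (fun p : (Fin n → ℝ) × (Fin m → ℝ) => u p.1 p.2) (Ω ×ˢ P)) :
    ∀ y ∈ Ω, ∀ x ∈ P,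
      -(lap (fun y' => u y' x) y)
        = lap (fun y' => φ y' (R y x)) y
          - ∑ a : Fin n,
              dotp
                ((hess (φ y) (R y x))⁻¹.mulVec
                  (grad (fun ρ' => pd (fun y' => φ y' ρ') a y) (R y x)))
                (grad (fun ρ' => pd (fun y' => φ y' ρ') a y) (R y x)) := by
  intro y hy x hx
  have hφ2 : ∀ y ∈ Ω, ∀ ρ, ContDiffAt ℝ 2 (Function.uncurry φ) (y, ρ) := fun y hy ρ =>
    (hφ.contDiffAt ((hΩ.prod isOpen_univ).mem_nhds ⟨hy, trivial⟩)).of_le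
      (WithTop.coe_le_coe.2 le_top)
  have hu2 : ∀ y ∈ Ω, ∀ x ∈ P, ContDiffAt ℝ 2 (Function.uncurry u) (y, x) := fun y hy x hx =>
    (husm.contDiffAt ((hΩ.prod hP).mem_nhds ⟨hy, hx⟩)).of_le (WithTop.coe_le_coe.2 le_top)
  have hfenchel : ∀ y ∈ Ω, ∀ x ∈ P, ∀ ρ, dotp x ρ - φ y ρ ≤ u y x := fun y hy x hx ρ =>
    hu y hy x hx ▸ dotp_sub_le_of_grad_eq
      (contDiff_iff_contDiffAt.2 fun ρ => (hφ2 y hy ρ).of_uncurry_right)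
      (fun ρ => (hpos y hy ρ).posSemidef) (hR₁ y hy x hx) ρ
  have hRgrad : ∀ y' ∈ Ω, R y' x = grad (u y') x := fun y' hy' =>
    (grad_eq_of_dotp_sub_le ((hu2 y' hy' x hx).of_uncurry_right.differentiableAt two_ne_zero)
      (eventually_of_mem (hP.mem_nhds hx) fun x' hx' => hfenchel y' hy' x' hx' _)
      (hu y' hy' x hx)).symm
  have hRdiff : DifferentiableAt ℝ (fun y' => R y' x) y :=
    (differentiableAt_grad_snd (hu2 y hy x hx)).congr_of_eventuallyEq
      (eventually_of_mem (hΩ.mem_nhds hy) hRgrad)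
  have henv : ∀ a, (fun y' => pd (fun y'' => u y'' x) a y')
      =ᶠ[𝓝 y] fun y' => -pd (fun y'' => φ y'' (R y' x)) a y' :=
    fun a => eventually_of_mem (hΩ.mem_nhds hy) fun y' hy' =>
      pd_eq_neg_pd_of_le ((hu2 y' hy' x hx).of_uncurry_left.differentiableAt two_ne_zero)
        ((hφ2 y' hy' _).of_uncurry_left.differentiableAt two_ne_zero)
        (eventually_of_mem (hΩ.mem_nhds hy') fun y'' hy'' => hfenchel y'' hy'' x hx _)
        (hu y' hy' x hx) a
  simp only [lap, ← Finset.sum_neg_distrib, ← Finset.sum_sub_distrib]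
  refine Finset.sum_congr rfl fun a _ => ?_
  rw [(henv a).pd_eq, pd_neg, neg_neg]
  exact pd_pd_comp_of_grad_eq (hφ2 y hy _) hRdiff
    (eventually_of_mem (hΩ.mem_nhds hy) fun y' hy' => hR₁ y' hy' x hx) (hpos y hy _).isUnit a

/-- **Laplace–Legendre identity.**  For a smooth family `φ : Ω × ℝᵐ → ℝ` of strictly convex
functions whose `ρ`-gradient is a bijection onto a fixed open set `P`, with fiberwise
Legendre transform `u`, one has
`−Δ_y u(y,x) = Δ_y φ(y,ρ) − Σ_a ⟨(∇²_ρφ)⁻¹ ∇_ρ(∂_{y_a}φ), ∇_ρ(∂_{y_a}φ)⟩` at `ρ = ∇ₓu(y,x)`. -/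
theorem laplace_legendre_identity
    {m n : ℕ} (hm : 1 ≤ m) (hn : 1 ≤ n)
    (Ω : Set (Fin n → ℝ)) (hΩ : IsOpen Ω)
    (P : Set (Fin m → ℝ)) (hP : IsOpen P)
    (φ : (Fin n → ℝ) → (Fin m → ℝ) → ℝ)
    (hφ : ContDiffOn ℝ (⊤ : ℕ∞)
      (fun p : (Fin n → ℝ) × (Fin m → ℝ) => φ p.1 p.2) (Ω ×ˢ Set.univ))
    (hpos : ∀ y ∈ Ω, ∀ ρ : Fin m → ℝ, (hess (φ y) ρ).PosDef)
    -- `R y` is the inverse of the gradient map `∇_ρ φ(y,·) : ℝᵐ → P`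
    (R : (Fin n → ℝ) → (Fin m → ℝ) → (Fin m → ℝ))
    (hmem : ∀ y ∈ Ω, ∀ ρ : Fin m → ℝ, grad (φ y) ρ ∈ P)
    (hR₁ : ∀ y ∈ Ω, ∀ x ∈ P, grad (φ y) (R y x) = x)
    (hR₂ : ∀ y ∈ Ω, ∀ ρ : Fin m → ℝ, R y (grad (φ y) ρ) = ρ)
    -- `u(y,·)` is the Legendre transform of `φ(y,·)`
    (u : (Fin n → ℝ) → (Fin m → ℝ) → ℝ)
    (hu : ∀ y ∈ Ω, ∀ x ∈ P, u y x = dotp x (R y x) - φ y (R y x))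
    (husm : ContDiffOn ℝ (⊤ : ℕ∞)
      (fun p : (Fin n → ℝ) × (Fin m → ℝ) => u p.1 p.2) (Ω ×ˢ P)) :
    ∀ y ∈ Ω, ∀ x ∈ P,
      -(lap (fun y' => u y' x) y)
        = lap (fun y' => φ y' (R y x)) y
          - ∑ a : Fin n,
              dotp
                ((hess (φ y) (R y x))⁻¹.mulVec
                  (grad (fun ρ' => pd (fun y' => φ y' ρ') a y) (R y x)))
                (grad (fun ρ' => pd (fun y' => φ y' ρ') a y) (R y x)) :=
  laplace_legendre_identity_general Ω hΩ P hP φ hφ hpos R hR₁ u hu husm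
end
end

section
/- The map φ satisfies the torus-invariant harmonic map equation, namely Δ_y φ(y,ρ) = Σ_{a=1}^{n} ⟨(∇²_ρφ(y,ρ))⁻¹ ∇_ρ(∂_{y_a}φ)(y,ρ), ∇_ρ(∂_{y_a}φ)(y,ρ)⟩ for all (y,ρ) ∈ Ω × ℝᵐ, if and only if for every fixed x ∈ P the function y ↦ u(y,x) is harmonic on Ω, i.e. Δ_y u(y,x) = 0 for all y ∈ Ω. (The Legendre transform linearizes the harmonic map equation.) -/
open scoped BigOperators
open MeasureTheory Real

noncomputable section

/-!
Write `x = ∇_ρφ(y,ρ)`, `H = ∇²_ρφ(y,ρ)` and `g_a = ∇_ρ ∂_{y_a}φ(y,ρ)`. Differentiating the Legendre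
identity `φ(y,ρ) + u(y, ∇_ρφ(y,ρ)) = ⟨∇_ρφ(y,ρ), ρ⟩` once, and using that the differential of
`(y,ρ) ↦ (y, ∇_ρφ(y,ρ))` is onto because `H` is invertible, gives `∇_x u(y,x) = ρ` and
`∂_{y_a} u(y,x) = -∂_{y_a} φ(y,ρ)`. Differentiating these once more yields `∇²_x u = H⁻¹`,
`∇_x ∂_{y_a} u = -H⁻¹ g_a` and finally `∂²_{y_a} u(y,x) = -∂²_{y_a} φ(y,ρ) + ⟨H⁻¹ g_a, g_a⟩`.
Summing over `a`,
  `Δ_y φ(y,ρ) + Δ_y u(y, ∇_ρφ(y,ρ)) = Σ_a ⟨H⁻¹ g_a, g_a⟩`,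
so the harmonic map equation at `(y,ρ)` is equivalent to `Δ_y u(y,x) = 0`, and `x` ranges over all
of `P` as `ρ` ranges over `ℝᵐ`.
-/

open Matrix ContinuousLinearMap

section FiberCalculus

variable {E : Type*} [NormedAddCommGroup E] [NormedSpace ℝ E] {ι : Type*} [Fintype ι]

lemma hasFDerivAt_snd_dotProduct (k : ι → ℝ) (w : E × (ι → ℝ)) :
    HasFDerivAt (fun w' : E × (ι → ℝ) => w'.2 ⬝ᵥ k)
      (∑ j, k j • (proj j).comp (snd ℝ E (ι → ℝ))) w :=
  HasFDerivAt.fun_sum fun j _ => ((proj j).comp (snd ℝ E (ι → ℝ))).hasFDerivAt.mul_const (k j)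

variable [DecidableEq ι]

def fiberGrad : (E × (ι → ℝ) →L[ℝ] ℝ) →L[ℝ] (ι → ℝ) :=
  ContinuousLinearMap.pi fun j => ContinuousLinearMap.apply ℝ ℝ (0, Pi.single j 1)

def fiberHess (B : E × (ι → ℝ) →L[ℝ] E × (ι → ℝ) →L[ℝ] ℝ) : Matrix ι ι ℝ :=
  Matrix.of fun i j => B (0, Pi.single i 1) (0, Pi.single j 1)

def legendreDiff (B : E × (ι → ℝ) →L[ℝ] E × (ι → ℝ) →L[ℝ] ℝ) :
    E × (ι → ℝ) →L[ℝ] E × (ι → ℝ) :=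
  (ContinuousLinearMap.fst ℝ E (ι → ℝ)).prod (fiberGrad.comp B)

lemma fiberGrad_apply (L : E × (ι → ℝ) →L[ℝ] ℝ) (j : ι) :
    fiberGrad L j = L (0, Pi.single j 1) := rfl

lemma legendreDiff_apply (B : E × (ι → ℝ) →L[ℝ] E × (ι → ℝ) →L[ℝ] ℝ) (v : E × (ι → ℝ)) :
    legendreDiff B v = (v.1, fiberGrad (B v)) := rfl

lemma fiberGrad_dotProduct (L : E × (ι → ℝ) →L[ℝ] ℝ) (k : ι → ℝ) :
    fiberGrad L ⬝ᵥ k = L (0, k) := by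
  have hk : ((0, k) : E × (ι → ℝ)) = ∑ j, k j • ((0 : E), (Pi.single j 1 : ι → ℝ)) := by
    ext1
    · simp [Prod.fst_sum]
    · simpa [Prod.snd_sum, ← Pi.single_smul'] using (Finset.univ_sum_single k).symm
  simp only [hk, map_sum, map_smul, smul_eq_mul, dotProduct, mul_comm]
  rfl

lemma fiberGrad_zero_mk_eq_vecMul (B : E × (ι → ℝ) →L[ℝ] E × (ι → ℝ) →L[ℝ] ℝ) (k : ι → ℝ) :
    fiberGrad (B (0, k)) = k ᵥ* fiberHess B := by
  ext j
  rw [fiberGrad_apply, vecMul, dotProduct_comm, ← flip_apply B, ← fiberGrad_dotProduct]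
  rfl

lemma legendreDiff_surjective {B : E × (ι → ℝ) →L[ℝ] E × (ι → ℝ) →L[ℝ] ℝ}
    (hB : IsUnit (fiberHess B).det) : Function.Surjective (legendreDiff B) := by
  rintro ⟨h, k⟩
  set c := (k - fiberGrad (B (h, 0))) ᵥ* (fiberHess B)⁻¹
  refine ⟨(h, c), ?_⟩
  have hsplit : ((h, c) : E × (ι → ℝ)) = (h, 0) + (0, c) := by simp
  rw [legendreDiff_apply, hsplit, map_add, map_add, fiberGrad_zero_mk_eq_vecMul, vecMul_vecMul,
    nonsing_inv_mul _ hB, vecMul_one]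
  simp

/-- With `g = fiberGrad (B (h, 0))` and `k = g ᵥ* (fiberHess B)⁻¹`, `legendreDiff B` sends `(h, 0)`
to `(h, g)` and `(0, k)` to `(0, g)`, so `hAB` evaluates `A` on `(h, 0) = (h, g) - (0, g)`. -/
theorem diag_add_diag_eq_inv_dotProduct {A B : E × (ι → ℝ) →L[ℝ] E × (ι → ℝ) →L[ℝ] ℝ}
    (hA : ∀ x y, A x y = A y x) (hB : IsUnit (fiberHess B).det)
    (hAB : ∀ v d, A (legendreDiff B v) d = v.2 ⬝ᵥ d.2 - B v (d.1, 0)) (h : E) :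
    B (h, 0) (h, 0) + A (h, 0) (h, 0)
      = (fiberHess B)⁻¹ *ᵥ fiberGrad (B (h, 0)) ⬝ᵥ fiberGrad (B (h, 0)) := by
  set g := fiberGrad (B (h, 0))
  set k := g ᵥ* (fiberHess B)⁻¹
  have hk : legendreDiff B (0, k) = (0, g) := by
    rw [legendreDiff_apply, fiberGrad_zero_mk_eq_vecMul, vecMul_vecMul, nonsing_inv_mul _ hB,
      vecMul_one]
  have hh : legendreDiff B (h, 0) = (h, 0) + (0, g) := by simp [legendreDiff_apply, g]
  have hA₁ : A (h, 0) (h, 0) = -B (h, 0) (h, 0) - A (0, g) (h, 0) := by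
    have := hAB (h, 0) (h, 0)
    rw [hh, map_add, _root_.add_apply] at this
    simp only [dotProduct_zero, zero_sub] at this
    linarith
  have hA₂ : A (0, g) (h, 0) = -(k ⬝ᵥ g) := by
    have h₁ := hAB (h, 0) (0, g)
    have h₂ := hAB (0, k) (0, g)
    rw [hh, map_add, _root_.add_apply] at h₁
    rw [hk] at h₂
    simp only [zero_dotProduct, Prod.mk_zero_zero, map_zero, sub_self, sub_zero] at h₁ h₂
    rw [hA]
    linarith
  rw [hA₁, hA₂, dotProduct_comm ((fiberHess B)⁻¹ *ᵥ g) g, dotProduct_mulVec]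
  ring

end FiberCalculus

section SecondDerivative

variable {X Y : Type*} [NormedAddCommGroup X] [NormedSpace ℝ X] [NormedAddCommGroup Y]
  [NormedSpace ℝ Y] {f : X → Y} {s : Set X} {x : X}

lemma ContDiffOn.hasFDerivAt_of_isOpen (hf : ContDiffOn ℝ 2 f s) (hs : IsOpen s) (hx : x ∈ s) :
    HasFDerivAt f (fderiv ℝ f x) x :=
  ((hf.contDiffAt (hs.mem_nhds hx)).differentiableAt two_ne_zero).hasFDerivAt

lemma ContDiffOn.hasFDerivAt_fderiv_of_isOpen (hf : ContDiffOn ℝ 2 f s) (hs : IsOpen s)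
    (hx : x ∈ s) : HasFDerivAt (fderiv ℝ f) (fderiv ℝ (fderiv ℝ f) x) x :=
  (((hf.fderiv_of_isOpen hs (m := 1) le_rfl).contDiffAt (hs.mem_nhds hx)).differentiableAt
    one_ne_zero).hasFDerivAt

lemma ContDiffOn.fderiv_fderiv_swap_of_isOpen (hf : ContDiffOn ℝ 2 f s) (hs : IsOpen s)
    (hx : x ∈ s) (v v' : X) : fderiv ℝ (fderiv ℝ f) x v v' = fderiv ℝ (fderiv ℝ f) x v' v :=
  ((hf.contDiffAt (hs.mem_nhds hx)).isSymmSndFDerivAt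
    (by rw [minSmoothness_of_isRCLikeNormedField])).eq v v'

end SecondDerivative

section Legendre

variable {E : Type*} [NormedAddCommGroup E] [NormedSpace ℝ E] {ι : Type*} [Fintype ι]
  [DecidableEq ι]

def legendreMap (f : E × (ι → ℝ) → ℝ) (w : E × (ι → ℝ)) : E × (ι → ℝ) :=
  (w.1, fiberGrad (fderiv ℝ f w))

structure IsLegendreDualOn (f g : E × (ι → ℝ) → ℝ) (S T : Set (E × (ι → ℝ))) : Prop where
  isOpen_left : IsOpen S
  isOpen_right : IsOpen T
  contDiffOn_left : ContDiffOn ℝ 2 f S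
  contDiffOn_right : ContDiffOn ℝ 2 g T
  mapsTo : Set.MapsTo (legendreMap f) S T
  isUnit_det : ∀ w ∈ S, IsUnit (fiberHess (fderiv ℝ (fderiv ℝ f) w)).det
  add_eq : ∀ w ∈ S, f w + g (legendreMap f w) = fiberGrad (fderiv ℝ f w) ⬝ᵥ w.2

variable {f g : E × (ι → ℝ) → ℝ} {S T : Set (E × (ι → ℝ))} {w : E × (ι → ℝ)}

lemma hasFDerivAt_legendreMap (hf : ContDiffOn ℝ 2 f S) (hS : IsOpen S) (hw : w ∈ S) :
    HasFDerivAt (legendreMap f) (legendreDiff (fderiv ℝ (fderiv ℝ f) w)) w :=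
  hasFDerivAt_fst.prodMk
    ((fiberGrad (E := E) (ι := ι)).hasFDerivAt.comp w (hf.hasFDerivAt_fderiv_of_isOpen hS hw))

namespace IsLegendreDualOn

theorem fderiv_right_apply (hfg : IsLegendreDualOn f g S T) (hw : w ∈ S) (d : E × (ι → ℝ)) :
    fderiv ℝ g (legendreMap f w) d = w.2 ⬝ᵥ d.2 - fderiv ℝ f w (d.1, 0) := by
  obtain ⟨v, rfl⟩ := legendreDiff_surjective (hfg.isUnit_det w hw) d
  have hlhs := (hfg.contDiffOn_left.hasFDerivAt_of_isOpen hfg.isOpen_left hw).add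
    ((hfg.contDiffOn_right.hasFDerivAt_of_isOpen hfg.isOpen_right (hfg.mapsTo hw)).comp w
      (hasFDerivAt_legendreMap hfg.contDiffOn_left hfg.isOpen_left hw))
  -- `⟨∇_ρ f, ρ⟩ = f'(w) (0, ρ)` is a derivative applied to a linear function of `w`
  have hrhs := (hfg.contDiffOn_left.hasFDerivAt_fderiv_of_isOpen hfg.isOpen_left hw).clm_apply
    ((inr ℝ E (ι → ℝ)).comp (snd ℝ E (ι → ℝ))).hasFDerivAt
  have heq : (fun w' => f w' + g (legendreMap f w')) =ᶠ[nhds w]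
      fun w' => fderiv ℝ f w' (0, w'.2) :=
    Filter.eventuallyEq_of_mem (hfg.isOpen_left.mem_nhds hw) fun w' hw' => by
      rw [hfg.add_eq w' hw', fiberGrad_dotProduct]
  have hv := congrArg (fun L => L v) (hlhs.unique (hrhs.congr_of_eventuallyEq heq))
  simp only [_root_.add_apply, coe_comp, Function.comp_apply, coe_snd', inr_apply, flip_apply,
    legendreDiff_apply] at hv
  have hsplit : fderiv ℝ f w v = fderiv ℝ f w (v.1, 0) + fderiv ℝ f w (0, v.2) := by
    rw [← map_add, Prod.mk_add_mk, add_zero, zero_add]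
  rw [legendreDiff_apply, dotProduct_comm, fiberGrad_dotProduct]
  linarith

theorem fderiv_fderiv_right_apply (hfg : IsLegendreDualOn f g S T) (hw : w ∈ S)
    (v d : E × (ι → ℝ)) :
    fderiv ℝ (fderiv ℝ g) (legendreMap f w) (legendreDiff (fderiv ℝ (fderiv ℝ f) w) v) d
      = v.2 ⬝ᵥ d.2 - fderiv ℝ (fderiv ℝ f) w v (d.1, 0) := by
  have hlhs := (apply ℝ ℝ d).hasFDerivAt.comp w
    ((hfg.contDiffOn_right.hasFDerivAt_fderiv_of_isOpen hfg.isOpen_right (hfg.mapsTo hw)).comp w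
      (hasFDerivAt_legendreMap hfg.contDiffOn_left hfg.isOpen_left hw))
  have hrhs := (hasFDerivAt_snd_dotProduct d.2 w).sub
    ((apply ℝ ℝ ((d.1, 0) : E × (ι → ℝ))).hasFDerivAt.comp w
      (hfg.contDiffOn_left.hasFDerivAt_fderiv_of_isOpen hfg.isOpen_left hw))
  have heq : (fun w' => fderiv ℝ g (legendreMap f w') d) =ᶠ[nhds w]
      fun w' => w'.2 ⬝ᵥ d.2 - fderiv ℝ f w' (d.1, 0) :=
    Filter.eventuallyEq_of_mem (hfg.isOpen_left.mem_nhds hw) fun w' hw' =>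
      hfg.fderiv_right_apply hw' d
  have hv := congrArg (fun L => L v) (hlhs.unique (hrhs.congr_of_eventuallyEq heq))
  simpa [dotProduct, mul_comm] using hv

theorem fderiv_fderiv_add_fderiv_fderiv (hfg : IsLegendreDualOn f g S T) (hw : w ∈ S) (h : E) :
    fderiv ℝ (fderiv ℝ f) w (h, 0) (h, 0)
        + fderiv ℝ (fderiv ℝ g) (legendreMap f w) (h, 0) (h, 0)
      = (fiberHess (fderiv ℝ (fderiv ℝ f) w))⁻¹ *ᵥ fiberGrad (fderiv ℝ (fderiv ℝ f) w (h, 0))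
          ⬝ᵥ fiberGrad (fderiv ℝ (fderiv ℝ f) w (h, 0)) :=
  diag_add_diag_eq_inv_dotProduct
    (hfg.contDiffOn_right.fderiv_fderiv_swap_of_isOpen hfg.isOpen_right (hfg.mapsTo hw))
    (hfg.isUnit_det w hw) (hfg.fderiv_fderiv_right_apply hw) h

end IsLegendreDualOn

end Legendre

section Coordinates

open Function

variable {n m : ℕ}

lemma pd_congr {k : ℕ} {f₁ f₂ : (Fin k → ℝ) → ℝ} {p : Fin k → ℝ} (h : f₁ =ᶠ[nhds p] f₂)
    (i : Fin k) : pd f₁ i p = pd f₂ i p := by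
  rw [pd, pd, h.fderiv_eq]

lemma pd_left_of_hasFDerivAt {f : (Fin n → ℝ) × (Fin m → ℝ) → ℝ}
    {f' : (Fin n → ℝ) × (Fin m → ℝ) →L[ℝ] ℝ} {y : Fin n → ℝ} {ρ : Fin m → ℝ}
    (hf : HasFDerivAt f f' (y, ρ)) (a : Fin n) :
    pd (fun y' => f (y', ρ)) a y = f' (Pi.single a 1, 0) := by
  have hslice : HasFDerivAt (fun y' => f (y', ρ)) (f'.comp (.inl ℝ _ _)) y :=
    hf.comp y (hasFDerivAt_prodMk_left y ρ)
  rw [pd, hslice.fderiv]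
  rfl

lemma pd_right_of_hasFDerivAt {f : (Fin n → ℝ) × (Fin m → ℝ) → ℝ}
    {f' : (Fin n → ℝ) × (Fin m → ℝ) →L[ℝ] ℝ} {y : Fin n → ℝ} {ρ : Fin m → ℝ}
    (hf : HasFDerivAt f f' (y, ρ)) (i : Fin m) :
    pd (fun ρ' => f (y, ρ')) i ρ = f' (0, Pi.single i 1) := by
  have hslice : HasFDerivAt (fun ρ' => f (y, ρ')) (f'.comp (.inr ℝ _ _)) ρ :=
    hf.comp ρ (hasFDerivAt_prodMk_right y ρ)
  rw [pd, hslice.fderiv]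
  rfl

variable {φ : (Fin n → ℝ) → (Fin m → ℝ) → ℝ} {S : Set ((Fin n → ℝ) × (Fin m → ℝ))}
  {y : Fin n → ℝ} {ρ : Fin m → ℝ}

lemma pd_left_eq (hφ : ContDiffOn ℝ 2 (uncurry φ) S) (hS : IsOpen S) (hw : (y, ρ) ∈ S)
    (a : Fin n) : pd (fun y' => φ y' ρ) a y = fderiv ℝ (uncurry φ) (y, ρ) (Pi.single a 1, 0) :=
  pd_left_of_hasFDerivAt (hφ.hasFDerivAt_of_isOpen hS hw) a

lemma pd_right_eq (hφ : ContDiffOn ℝ 2 (uncurry φ) S) (hS : IsOpen S) (hw : (y, ρ) ∈ S)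
    (i : Fin m) : pd (φ y) i ρ = fderiv ℝ (uncurry φ) (y, ρ) (0, Pi.single i 1) :=
  pd_right_of_hasFDerivAt (hφ.hasFDerivAt_of_isOpen hS hw) i

lemma hasFDerivAt_fderiv_apply (hφ : ContDiffOn ℝ 2 (uncurry φ) S) (hS : IsOpen S)
    (hw : (y, ρ) ∈ S) (v : (Fin n → ℝ) × (Fin m → ℝ)) :
    HasFDerivAt (fun w => fderiv ℝ (uncurry φ) w v)
      ((fderiv ℝ (fderiv ℝ (uncurry φ)) (y, ρ)).flip v) (y, ρ) :=
  (ContinuousLinearMap.apply ℝ ℝ v).hasFDerivAt.comp _ (hφ.hasFDerivAt_fderiv_of_isOpen hS hw)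

lemma eventually_left_mem (hS : IsOpen S) (hw : (y, ρ) ∈ S) : ∀ᶠ y' in nhds y, (y', ρ) ∈ S :=
  (continuous_id.prodMk continuous_const).continuousAt.preimage_mem_nhds (hS.mem_nhds hw)

lemma eventually_right_mem (hS : IsOpen S) (hw : (y, ρ) ∈ S) : ∀ᶠ ρ' in nhds ρ, (y, ρ') ∈ S :=
  (continuous_const.prodMk continuous_id).continuousAt.preimage_mem_nhds (hS.mem_nhds hw)

lemma lap_left_eq (hφ : ContDiffOn ℝ 2 (uncurry φ) S) (hS : IsOpen S) (hw : (y, ρ) ∈ S) :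
    lap (fun y' => φ y' ρ) y
      = ∑ a, fderiv ℝ (fderiv ℝ (uncurry φ)) (y, ρ) (Pi.single a 1, 0) (Pi.single a 1, 0) := by
  refine Finset.sum_congr rfl fun a _ => ?_
  rw [pd_congr ((eventually_left_mem hS hw).mono fun y' hy' => pd_left_eq hφ hS hy' a)]
  exact pd_left_of_hasFDerivAt (f := fun w => fderiv ℝ (uncurry φ) w _)
    (hasFDerivAt_fderiv_apply hφ hS hw _) a

lemma grad_right_eq (hφ : ContDiffOn ℝ 2 (uncurry φ) S) (hS : IsOpen S) (hw : (y, ρ) ∈ S) :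
    grad (φ y) ρ = fiberGrad (fderiv ℝ (uncurry φ) (y, ρ)) :=
  funext (pd_right_eq hφ hS hw)

lemma hess_right_eq (hφ : ContDiffOn ℝ 2 (uncurry φ) S) (hS : IsOpen S) (hw : (y, ρ) ∈ S) :
    hess (φ y) ρ = fiberHess (fderiv ℝ (fderiv ℝ (uncurry φ)) (y, ρ)) := by
  ext i j
  rw [hess, Matrix.of_apply,
    pd_congr ((eventually_right_mem hS hw).mono fun ρ' hρ' => pd_right_eq hφ hS hρ' j)]
  exact pd_right_of_hasFDerivAt (f := fun w => fderiv ℝ (uncurry φ) w _)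
    (hasFDerivAt_fderiv_apply hφ hS hw _) i

lemma grad_pd_left_eq (hφ : ContDiffOn ℝ 2 (uncurry φ) S) (hS : IsOpen S) (hw : (y, ρ) ∈ S)
    (a : Fin n) :
    grad (fun ρ' => pd (fun y' => φ y' ρ') a y) ρ
      = fiberGrad (fderiv ℝ (fderiv ℝ (uncurry φ)) (y, ρ) (Pi.single a 1, 0)) := by
  ext i
  rw [grad, pd_congr ((eventually_right_mem hS hw).mono fun ρ' hρ' => pd_left_eq hφ hS hρ' a),
    pd_right_of_hasFDerivAt (f := fun w => fderiv ℝ (uncurry φ) w _)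
      (hasFDerivAt_fderiv_apply hφ hS hw _) i]
  exact hφ.fderiv_fderiv_swap_of_isOpen hS hw _ _

theorem IsLegendreDualOn.lap_add_lap_legendre_eq {u : (Fin n → ℝ) → (Fin m → ℝ) → ℝ}
    {T : Set ((Fin n → ℝ) × (Fin m → ℝ))} (hdual : IsLegendreDualOn (uncurry φ) (uncurry u) S T)
    (hw : (y, ρ) ∈ S) :
    lap (fun y' => φ y' ρ) y + lap (fun y' => u y' (grad (φ y) ρ)) y
      = ∑ a : Fin n,
          dotp ((hess (φ y) ρ)⁻¹.mulVec (grad (fun ρ' => pd (fun y' => φ y' ρ') a y) ρ))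
            (grad (fun ρ' => pd (fun y' => φ y' ρ') a y) ρ) := by
  have hφ := hdual.contDiffOn_left
  have hS := hdual.isOpen_left
  have hmap : legendreMap (uncurry φ) (y, ρ) = (y, grad (φ y) ρ) := by
    rw [legendreMap, grad_right_eq hφ hS hw]
  have hmem : (y, grad (φ y) ρ) ∈ T := hmap ▸ hdual.mapsTo hw
  rw [lap_left_eq hφ hS hw, lap_left_eq hdual.contDiffOn_right hdual.isOpen_right hmem,
    ← Finset.sum_add_distrib, hess_right_eq hφ hS hw, ← hmap]
  refine Finset.sum_congr rfl fun a _ => ?_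
  rw [grad_pd_left_eq hφ hS hw]
  exact hdual.fderiv_fderiv_add_fderiv_fderiv hw _

end Coordinates

theorem harmonic_map_iff_legendre_harmonic_general
    {m n : ℕ}
    (Ω : Set (Fin n → ℝ)) (hΩ : IsOpen Ω)
    (P : Set (Fin m → ℝ)) (hP : IsOpen P)
    (φ : (Fin n → ℝ) → (Fin m → ℝ) → ℝ)
    (hφ : ContDiffOn ℝ (⊤ : ℕ∞)
      (fun p : (Fin n → ℝ) × (Fin m → ℝ) => φ p.1 p.2) (Ω ×ˢ Set.univ))
    (hpos : ∀ y ∈ Ω, ∀ ρ : Fin m → ℝ, (hess (φ y) ρ).PosDef)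
    (R : (Fin n → ℝ) → (Fin m → ℝ) → (Fin m → ℝ))
    (hmem : ∀ y ∈ Ω, ∀ ρ : Fin m → ℝ, grad (φ y) ρ ∈ P)
    (hR₁ : ∀ y ∈ Ω, ∀ x ∈ P, grad (φ y) (R y x) = x)
    (hR₂ : ∀ y ∈ Ω, ∀ ρ : Fin m → ℝ, R y (grad (φ y) ρ) = ρ)
    (u : (Fin n → ℝ) → (Fin m → ℝ) → ℝ)
    (hu : ∀ y ∈ Ω, ∀ x ∈ P, u y x = dotp x (R y x) - φ y (R y x))
    (husm : ContDiffOn ℝ (⊤ : ℕ∞)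
      (fun p : (Fin n → ℝ) × (Fin m → ℝ) => u p.1 p.2) (Ω ×ˢ P)) :
    (∀ y ∈ Ω, ∀ ρ : Fin m → ℝ,
        lap (fun y' => φ y' ρ) y
          = ∑ a : Fin n,
              dotp
                ((hess (φ y) ρ)⁻¹.mulVec
                  (grad (fun ρ' => pd (fun y' => φ y' ρ') a y) ρ))
                (grad (fun ρ' => pd (fun y' => φ y' ρ') a y) ρ))
      ↔ (∀ x ∈ P, ∀ y ∈ Ω, lap (fun y' => u y' x) y = 0) := by
  have hS : IsOpen (Ω ×ˢ (Set.univ : Set (Fin m → ℝ))) := hΩ.prod isOpen_univ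
  have hφ₂ : ContDiffOn ℝ 2 (Function.uncurry φ) (Ω ×ˢ Set.univ) :=
    hφ.of_le (WithTop.coe_le_coe.2 le_top)
  have hdual : IsLegendreDualOn (Function.uncurry φ) (Function.uncurry u) (Ω ×ˢ Set.univ)
      (Ω ×ˢ P) := by
    refine ⟨hS, hΩ.prod hP, hφ₂, husm.of_le (WithTop.coe_le_coe.2 le_top), ?_, ?_, ?_⟩ <;>
      rintro ⟨y, ρ⟩ ⟨hy, -⟩
    · rw [legendreMap, ← grad_right_eq hφ₂ hS ⟨hy, trivial⟩]
      exact ⟨hy, hmem y hy ρ⟩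
    · rw [← hess_right_eq hφ₂ hS ⟨hy, trivial⟩]
      exact (hpos y hy ρ).det_pos.ne'.isUnit
    · rw [legendreMap, ← grad_right_eq hφ₂ hS ⟨hy, trivial⟩]
      show φ y ρ + u y _ = _
      rw [hu y hy _ (hmem y hy ρ), hR₂ y hy ρ, add_sub_cancel]
      rfl
  constructor
  · intro hharm x hx y hy
    have key := hdual.lap_add_lap_legendre_eq (ρ := R y x) ⟨hy, trivial⟩
    rw [hR₁ y hy x hx, hharm y hy (R y x)] at key
    linarith
  · intro hlin y hy ρ
    have key := hdual.lap_add_lap_legendre_eq (ρ := ρ) ⟨hy, trivial⟩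
    rw [hlin _ (hmem y hy ρ) y hy] at key
    linarith

/-- **The Legendre transform linearizes the harmonic map equation.**
`φ` satisfies the torus-invariant harmonic map equation iff, for every fixed `x ∈ P`,
the Legendre dual `y ↦ u(y,x)` is harmonic on `Ω`. -/
theorem harmonic_map_iff_legendre_harmonic
    {m n : ℕ} (hm : 1 ≤ m) (hn : 1 ≤ n)
    (Ω : Set (Fin n → ℝ)) (hΩ : IsOpen Ω)
    (P : Set (Fin m → ℝ)) (hP : IsOpen P)
    (φ : (Fin n → ℝ) → (Fin m → ℝ) → ℝ)
    (hφ : ContDiffOn ℝ (⊤ : ℕ∞)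
      (fun p : (Fin n → ℝ) × (Fin m → ℝ) => φ p.1 p.2) (Ω ×ˢ Set.univ))
    (hpos : ∀ y ∈ Ω, ∀ ρ : Fin m → ℝ, (hess (φ y) ρ).PosDef)
    (R : (Fin n → ℝ) → (Fin m → ℝ) → (Fin m → ℝ))
    (hmem : ∀ y ∈ Ω, ∀ ρ : Fin m → ℝ, grad (φ y) ρ ∈ P)
    (hR₁ : ∀ y ∈ Ω, ∀ x ∈ P, grad (φ y) (R y x) = x)
    (hR₂ : ∀ y ∈ Ω, ∀ ρ : Fin m → ℝ, R y (grad (φ y) ρ) = ρ)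
    (u : (Fin n → ℝ) → (Fin m → ℝ) → ℝ)
    (hu : ∀ y ∈ Ω, ∀ x ∈ P, u y x = dotp x (R y x) - φ y (R y x))
    (husm : ContDiffOn ℝ (⊤ : ℕ∞)
      (fun p : (Fin n → ℝ) × (Fin m → ℝ) => u p.1 p.2) (Ω ×ˢ P)) :
    (∀ y ∈ Ω, ∀ ρ : Fin m → ℝ,
        lap (fun y' => φ y' ρ) y
          = ∑ a : Fin n,
              dotp
                ((hess (φ y) ρ)⁻¹.mulVec
                  (grad (fun ρ' => pd (fun y' => φ y' ρ') a y) ρ))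
                (grad (fun ρ' => pd (fun y' => φ y' ρ') a y) ρ))
      ↔ (∀ x ∈ P, ∀ y ∈ Ω, lap (fun y' => u y' x) y = 0) :=
  harmonic_map_iff_legendre_harmonic_general Ω hΩ P hP φ hφ hpos R hmem hR₁ hR₂ u hu husm
end
end
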